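/- Let (j_!, j^*, j_*) be an adjoint triple of triangulated functors between triangulated categories T and T'' such that at least one of j_! and j_* is fully faithful. Let i_* : ker j^* → T be the full inclusion. Then i_* admits both a left adjoint i^* and a right adjoint i^!, and the resulting diagram is a recollement (ker j^*, T, T''). -/

import Mathlib

/-!
In an adjoint triple `j_!` is fully faithful iff `j_*` is, and then `j^*` inverts both the counit
`j_! j^* X ⟶ X` and the unit `X ⟶ j_* j^* X`; so the cone of the former and the fibre of the
latter lie in the shift-stable subcategory `K = ker j^*`. By adjunction, `j_! A` is left and
`j_* B` is right orthogonal to `K`. In a distinguished triangle `A ⟶ X ⟶ Z ⟶ A⟦1⟧` with `Z ∈ K`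
and `A` left orthogonal to the shift-stable `K`, the map `X ⟶ Z` is a reflection of `X` into
`K`, which produces `i^*` with the required unit; dually for `i^!`.
-/

open CategoryTheory Category Limits Pretriangulated

universe v₂ u₂ v₃ u₃

namespace CategoryTheory

instance ObjectProperty.isStableUnderShift_isZero {C A : Type*} [Category C]
    [HasZeroMorphisms C] [AddMonoid A] [HasShift C A]
    [∀ a : A, (shiftFunctor C a).PreservesZeroMorphisms] :
    ObjectProperty.IsStableUnderShift (IsZero : ObjectProperty C) A where
  isStableUnderShiftBy _ := { le_shift _ hX := Functor.map_isZero _ hX }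

lemma Adjunction.Triple.full_and_faithful_iff {C D : Type*} [Category C] [Category D]
    {F : C ⥤ D} {G : D ⥤ C} {H : C ⥤ D} (t : Adjunction.Triple F G H) :
    (F.Full ∧ F.Faithful) ↔ (H.Full ∧ H.Faithful) where
  mp := fun ⟨_, _⟩ ↦
    let h := t.fullyFaithfulEquiv (.ofFullyFaithful F)
    ⟨h.full, h.faithful⟩
  mpr := fun ⟨_, _⟩ ↦
    let h := t.fullyFaithfulEquiv.symm (.ofFullyFaithful H)
    ⟨h.full, h.faithful⟩

namespace Adjunction

variable {C D : Type*} [Category C] [Category D] {F : C ⥤ D} {G : D ⥤ C}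

lemma leftOrthogonal_kernel_obj [HasZeroMorphisms C] [HasZeroMorphisms D] (adj : F ⊣ G) (A : C) :
    G.kernel.leftOrthogonal (F.obj A) :=
  fun Y _ hY ↦ (adj.homEquiv A Y).injective (IsZero.eq_of_tgt hY _ _)

lemma rightOrthogonal_kernel_obj [HasZeroMorphisms C] [HasZeroMorphisms D] (adj : F ⊣ G)
    (B : D) : F.kernel.rightOrthogonal (G.obj B) :=
  fun X _ hX ↦ (adj.homEquiv X B).symm.injective (IsZero.eq_of_src hX _ _)

end Adjunction

section

variable {C : Type*} [Category C] [HasZeroObject C] [HasShift C ℤ] [Preadditive C]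
  [∀ n : ℤ, (CategoryTheory.shiftFunctor C n).Additive] [Pretriangulated C]

lemma Pretriangulated.Triangle.bijective_mor₂_comp (T : Triangle C) (hT : T ∈ distTriang C)
    {Y : C} (h₁ : ∀ f : T.obj₁ ⟶ Y, f = 0) (h₁' : ∀ f : T.obj₁⟦(1 : ℤ)⟧ ⟶ Y, f = 0) :
    Function.Bijective (fun g : T.obj₃ ⟶ Y ↦ T.mor₂ ≫ g) := by
  refine ⟨fun g₁ g₂ hg ↦ ?_, fun f ↦ ?_⟩
  · obtain ⟨k, hk⟩ := T.yoneda_exact₃ hT (g₁ - g₂)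
      (by rw [Preadditive.comp_sub]; exact sub_eq_zero.2 hg)
    rw [← sub_eq_zero, hk, h₁' k, comp_zero]
  · obtain ⟨g, rfl⟩ := T.yoneda_exact₂ hT f (h₁ _)
    exact ⟨g, rfl⟩

lemma Pretriangulated.Triangle.bijective_comp_mor₁ (T : Triangle C) (hT : T ∈ distTriang C)
    {Y : C} (h₃ : ∀ f : Y ⟶ T.obj₃, f = 0) (h₃' : ∀ f : Y ⟶ T.obj₃⟦(-1 : ℤ)⟧, f = 0) :
    Function.Bijective (fun g : Y ⟶ T.obj₁ ↦ g ≫ T.mor₁) := by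
  refine ⟨fun g₁ g₂ hg ↦ ?_, fun f ↦ ?_⟩
  · obtain ⟨k, hk⟩ := T.invRotate.coyoneda_exact₂ (inv_rot_of_distTriang _ hT) (g₁ - g₂)
      (by change (g₁ - g₂) ≫ T.mor₁ = 0; rw [Preadditive.sub_comp]; exact sub_eq_zero.2 hg)
    rw [← sub_eq_zero, hk, show k = 0 from h₃' k]
    exact zero_comp
  · obtain ⟨g, rfl⟩ := T.coyoneda_exact₂ hT f (h₃ _)
    exact ⟨g, rfl⟩

end

namespace ObjectProperty

variable {C : Type*} [Category C] [HasZeroObject C] [HasShift C ℤ] [Preadditive C]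
  [∀ n : ℤ, (shiftFunctor C n).Additive] [Pretriangulated C]
  (P : ObjectProperty C) [P.IsStableUnderShift ℤ]

lemma exists_leftAdjoint_ι_of_distTriang {A : C → C} (f : ∀ X, A X ⟶ X)
    (hA : ∀ X, P.leftOrthogonal (A X))
    (hZ : ∀ X {Z : C} (g : X ⟶ Z) (h : Z ⟶ (A X)⟦(1 : ℤ)⟧),
      Triangle.mk (f X) g h ∈ distTriang C → P Z) :
    ∃ (F : C ⥤ P.FullSubcategory) (adj : F ⊣ P.ι),
      ∀ X, ∃ ψ, Triangle.mk (f X) (adj.unit.app X) ψ ∈ distTriang C := by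
  choose Z g h hT using fun X ↦ distinguished_cocone_triangle (f X)
  let e X (Y : P.FullSubcategory) : ((⟨Z X, hZ X _ _ (hT X)⟩ : P.FullSubcategory) ⟶ Y) ≃
      (X ⟶ P.ι.obj Y) :=
    P.fullyFaithfulι.homEquiv.trans <| .ofBijective _ <|
      Triangle.bijective_mor₂_comp _ (hT X) (fun _ ↦ hA X _ Y.property)
        (fun _ ↦ P.leftOrthogonal.le_shift 1 _ (hA X) _ Y.property)
  let adj := Adjunction.adjunctionOfEquivLeft e fun _ _ _ _ _ ↦ (assoc _ _ _).symm
  have hunit X : adj.unit.app X = g X := comp_id (g X)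
  exact ⟨_, adj, fun X ↦ ⟨h X, by rw [hunit]; exact hT X⟩⟩

lemma exists_rightAdjoint_ι_of_distTriang {B : C → C} (g : ∀ X, X ⟶ B X)
    (hB : ∀ X, P.rightOrthogonal (B X))
    (hW : ∀ X {W : C} (f : W ⟶ X) (h : B X ⟶ W⟦(1 : ℤ)⟧),
      Triangle.mk f (g X) h ∈ distTriang C → P W) :
    ∃ (G : C ⥤ P.FullSubcategory) (adj : P.ι ⊣ G),
      ∀ X, ∃ ψ, Triangle.mk (adj.counit.app X) (g X) ψ ∈ distTriang C := by
  choose W f h hT using fun X ↦ distinguished_cocone_triangle₁ (g X)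
  let e (Y : P.FullSubcategory) X : (P.ι.obj Y ⟶ X) ≃
      (Y ⟶ (⟨W X, hW X _ _ (hT X)⟩ : P.FullSubcategory)) :=
    (P.fullyFaithfulι.homEquiv.trans <| .ofBijective _ <|
      Triangle.bijective_comp_mor₁ _ (hT X) (fun _ ↦ hB X _ Y.property)
        (fun _ ↦ P.rightOrthogonal.le_shift (-1) _ (hB X) _ Y.property)).symm
  have he Y' Y X (φ : Y' ⟶ Y) (k : P.ι.obj Y ⟶ X) :
      e Y' X (P.ι.map φ ≫ k) = φ ≫ e Y X k := by
    have hk : P.ι.map (e Y X k) ≫ f X = k := (e Y X).symm_apply_apply k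
    apply (e Y' X).symm.injective
    rw [Equiv.symm_apply_apply]
    change _ = P.ι.map (φ ≫ e Y X k) ≫ f X
    rw [Functor.map_comp, assoc, hk]
  let adj := Adjunction.adjunctionOfEquivRight e he
  have hcounit X : adj.counit.app X = f X := id_comp (f X)
  exact ⟨_, adj, fun X ↦ ⟨h X, by rw [hcounit]; exact hT X⟩⟩

end ObjectProperty

end CategoryTheory

variable {T : Type u₂} [Category.{v₂} T] [HasZeroObject T] [HasShift T ℤ] [Preadditive T]
  [∀ n : ℤ, (shiftFunctor T n).Additive] [Pretriangulated T]
variable {T'' : Type u₃} [Category.{v₃} T''] [HasZeroObject T''] [HasShift T'' ℤ] [Preadditive T'']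
  [∀ n : ℤ, (shiftFunctor T'' n).Additive] [Pretriangulated T'']

namespace CategoryTheory.Adjunction

variable {jS : T ⥤ T''} {jL jR : T'' ⥤ T} [jS.CommShift ℤ] [jS.IsTriangulated]

lemma exists_leftAdjoint_kernel_ι (adj : jL ⊣ jS) [jL.Full] [jL.Faithful] :
    ∃ (iL : T ⥤ jS.kernel.FullSubcategory) (adj₁ : iL ⊣ jS.kernel.ι),
      ∀ X, ∃ ψ, Triangle.mk (adj.counit.app X) (adj₁.unit.app X) ψ ∈ distTriang T :=
  jS.kernel.exists_leftAdjoint_ι_of_distTriang (fun X ↦ adj.counit.app X)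
    (fun _ ↦ adj.leftOrthogonal_kernel_obj _)
    (fun _ _ _ _ hT ↦ Triangle.isZero₃_of_isIso₁ _ (jS.map_distinguished _ hT)
      (inferInstanceAs (IsIso (jS.map (adj.counit.app _)))))

lemma exists_rightAdjoint_kernel_ι (adj : jS ⊣ jR) [jR.Full] [jR.Faithful] :
    ∃ (iR : T ⥤ jS.kernel.FullSubcategory) (adj₂ : jS.kernel.ι ⊣ iR),
      ∀ X, ∃ ψ, Triangle.mk (adj₂.counit.app X) (adj.unit.app X) ψ ∈ distTriang T :=
  jS.kernel.exists_rightAdjoint_ι_of_distTriang (fun X ↦ adj.unit.app X)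
    (fun _ ↦ adj.rightOrthogonal_kernel_obj _)
    (fun _ _ _ _ hT ↦ Triangle.isZero₁_of_isIso₂ _ (jS.map_distinguished _ hT)
      (inferInstanceAs (IsIso (jS.map (adj.unit.app _)))))

end CategoryTheory.Adjunction

theorem stmt_11_general (jS : T ⥤ T'') (jL jR : T'' ⥤ T)
    [jS.CommShift ℤ]
    [jS.IsTriangulated]
    (adj₃ : jL ⊣ jS) (adj₄ : jS ⊣ jR)
    (hff : (jL.Full ∧ jL.Faithful) ∨ (jR.Full ∧ jR.Faithful)) :
    ∃ (iL : T ⥤ ObjectProperty.FullSubcategory fun X : T => IsZero (jS.obj X))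
      (iR : T ⥤ ObjectProperty.FullSubcategory fun X : T => IsZero (jS.obj X))
      (adj₁ : iL ⊣ ObjectProperty.ι fun X : T => IsZero (jS.obj X))
      (adj₂ : (ObjectProperty.ι fun X : T => IsZero (jS.obj X)) ⊣ iR),
      (∀ Y : ObjectProperty.FullSubcategory fun X : T => IsZero (jS.obj X),
        IsZero (jS.obj ((ObjectProperty.ι fun X : T => IsZero (jS.obj X)).obj Y))) ∧
      (jL.Full ∧ jL.Faithful) ∧ (jR.Full ∧ jR.Faithful) ∧
      (∀ X : T,
        ∃ ψ : (ObjectProperty.ι fun X : T => IsZero (jS.obj X)).obj (iL.obj X) ⟶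
            (jL.obj (jS.obj X))⟦(1 : ℤ)⟧,
          Triangle.mk (adj₃.counit.app X) (adj₁.unit.app X) ψ ∈ distTriang T) ∧
      (∀ X : T,
        ∃ ψ : jR.obj (jS.obj X) ⟶
            ((ObjectProperty.ι fun X : T => IsZero (jS.obj X)).obj (iR.obj X))⟦(1 : ℤ)⟧,
          Triangle.mk (adj₂.counit.app X) (adj₄.unit.app X) ψ ∈ distTriang T) := by
  have hiff := (Adjunction.Triple.mk adj₃ adj₄).full_and_faithful_iff
  obtain ⟨⟨_, _⟩, ⟨_, _⟩⟩ : (jL.Full ∧ jL.Faithful) ∧ (jR.Full ∧ jR.Faithful) := by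
    rcases hff with h | h
    exacts [⟨h, hiff.1 h⟩, ⟨hiff.2 h, h⟩]
  obtain ⟨iL, adj₁, hL⟩ := adj₃.exists_leftAdjoint_kernel_ι
  obtain ⟨iR, adj₂, hR⟩ := adj₄.exists_rightAdjoint_kernel_ι
  exact ⟨iL, iR, adj₁, adj₂, fun Y ↦ Y.property, ⟨‹_›, ‹_›⟩, ⟨‹_›, ‹_›⟩, hL, hR⟩

/-- Given an adjoint triple `(j_!, j^*, j_*)` of triangulated functors with
at least one of `j_!`, `j_*` fully faithful, the inclusion `i_* : ker j^* ↪ T` admits a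
left adjoint `i^*` and a right adjoint `i^!` turning the diagram into a recollement
`(ker j^*, T, T'')`: `j^* i_* = 0`, the functors `i_*`, `j_!`, `j_*` are fully faithful,
and the two canonical exact triangles exist for every `X` in `T`. -/
theorem stmt_11 (jS : T ⥤ T'') (jL jR : T'' ⥤ T)
    [jS.CommShift ℤ] [jL.CommShift ℤ] [jR.CommShift ℤ]
    [jS.IsTriangulated] [jL.IsTriangulated] [jR.IsTriangulated]
    (adj₃ : jL ⊣ jS) (adj₄ : jS ⊣ jR)
    (hff : (jL.Full ∧ jL.Faithful) ∨ (jR.Full ∧ jR.Faithful)) :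
    ∃ (iL : T ⥤ ObjectProperty.FullSubcategory fun X : T => IsZero (jS.obj X))
      (iR : T ⥤ ObjectProperty.FullSubcategory fun X : T => IsZero (jS.obj X))
      (adj₁ : iL ⊣ ObjectProperty.ι fun X : T => IsZero (jS.obj X))
      (adj₂ : (ObjectProperty.ι fun X : T => IsZero (jS.obj X)) ⊣ iR),
      (∀ Y : ObjectProperty.FullSubcategory fun X : T => IsZero (jS.obj X),
        IsZero (jS.obj ((ObjectProperty.ι fun X : T => IsZero (jS.obj X)).obj Y))) ∧
      (jL.Full ∧ jL.Faithful) ∧ (jR.Full ∧ jR.Faithful) ∧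
      (∀ X : T,
        ∃ ψ : (ObjectProperty.ι fun X : T => IsZero (jS.obj X)).obj (iL.obj X) ⟶
            (jL.obj (jS.obj X))⟦(1 : ℤ)⟧,
          Triangle.mk (adj₃.counit.app X) (adj₁.unit.app X) ψ ∈ distTriang T) ∧
      (∀ X : T,
        ∃ ψ : jR.obj (jS.obj X) ⟶
            ((ObjectProperty.ι fun X : T => IsZero (jS.obj X)).obj (iR.obj X))⟦(1 : ℤ)⟧,
          Triangle.mk (adj₂.counit.app X) (adj₄.unit.app X) ψ ∈ distTriang T) :=
  stmt_11_general jS jL jR adj₃ adj₄ hff
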